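/- arXiv:2007.11516 — 2 statements merged into one kernel-verified Lean document; each statement's English description precedes it below -/
import Mathlib

section
/- Fix v ≥ 0, M ≥ 1 (integer), σ > 0, and l_k > 0, p_k ≥ 0 for k = 1,…,K. Suppose v* ≥ 0 satisfies the fixed-point equation e^{v*} = 1 + ∑_{k} l_k^2 p_k / (σ^2 + M l_k^2 p_k e^{−v*}). Then for all v ≥ 0, R(v) ≥ R(v*), where R(v) = ∑_k log₂(1 + M l_k^2 p_k / (e^v σ^2)) + M·log₂(e)·(v − 1 + e^{−v}). That is, the fixed point v* minimizes R over v ≥ 0. -/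
/-!
Measured in nats, `R(v) log 2 = ∑ₖ log (1 + aₖ e^{-v}) + M (v - 1 + e^{-v})` with
`aₖ = M lₖ² pₖ / σ²`, a sum of convex functions of `v`. Bounding every summand from below by
its tangent line at `v*`, the slopes cancel exactly when
`∑ₖ aₖ e^{-v*} / (1 + aₖ e^{-v*}) = M (1 - e^{-v*})`, and this stationarity condition is the
fixed-point equation multiplied by `M e^{-v*}`. So `v*` minimizes `R` on the whole real line.
-/

open Real Finset

lemma log_one_add_sub_mul_le_log_one_add_mul_exp_neg {b : ℝ} (hb : 0 ≤ b) (t : ℝ) :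
    log (1 + b) - b / (1 + b) * t ≤ log (1 + b * exp (-t)) := by
  have h1b : 0 < 1 + b := by linarith
  have hw : 1 / (1 + b) + b / (1 + b) = 1 := by field_simp
  -- weighted AM-GM between `1` and `e^{-t}` with weights `1 / (1 + b)` and `b / (1 + b)`
  have hamgm := geom_mean_le_arith_mean2_weighted (by positivity) (by positivity) zero_le_one
    (exp_pos (-t)).le hw
  rw [one_rpow, one_mul, ← exp_mul, mul_one, div_mul_eq_mul_div, ← add_div] at hamgm
  have hlog := log_le_log (exp_pos _) hamgm
  rw [log_exp, log_div (by positivity) h1b.ne'] at hlog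
  linarith

section Rate

variable {ι : Type*} [Fintype ι]

noncomputable def rateNats (M : ℝ) (a : ι → ℝ) (v : ℝ) : ℝ :=
  ∑ k, log (1 + a k * exp (-v)) + M * (v - 1 + exp (-v))

theorem rateNats_le_of_stationary {M : ℝ} (hM : 0 ≤ M) {a : ι → ℝ} (ha : ∀ k, 0 ≤ a k)
    {vstar : ℝ}
    (hstat : ∑ k, a k * exp (-vstar) / (1 + a k * exp (-vstar)) = M * (1 - exp (-vstar)))
    (v : ℝ) : rateNats M a vstar ≤ rateNats M a v := by
  set E := exp (-vstar)
  have hsplit : exp (-v) = E * exp (-(v - vstar)) := by rw [← exp_add]; ring_nf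
  have hlog : ∑ k, log (1 + a k * E) - M * (1 - E) * (v - vstar) ≤
      ∑ k, log (1 + a k * exp (-v)) := by
    rw [← hstat, sum_mul, ← sum_sub_distrib]
    refine sum_le_sum fun k _ => ?_
    rw [hsplit, ← mul_assoc]
    have := ha k
    exact log_one_add_sub_mul_le_log_one_add_mul_exp_neg (by positivity) _
  have hexp : M * E * (1 - (v - vstar)) ≤ M * exp (-v) := by
    rw [hsplit, mul_assoc]
    have := add_one_le_exp (-(v - vstar))
    gcongr
    linarith
  unfold rateNats
  linear_combination hlog + hexp

theorem stationary_of_fixedPoint {M s : ℝ} (hM : 0 ≤ M) (hs : 0 < s) {g : ι → ℝ}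
    (hg : ∀ k, 0 ≤ g k) {v : ℝ} (hfix : exp v = 1 + ∑ k, g k / (s + M * g k * exp (-v))) :
    ∑ k, M * g k / s * exp (-v) / (1 + M * g k / s * exp (-v)) = M * (1 - exp (-v)) := by
  have hterm : ∀ k, M * g k / s * exp (-v) / (1 + M * g k / s * exp (-v)) =
      M * exp (-v) * (g k / (s + M * g k * exp (-v))) := by
    intro k
    have : 0 ≤ M * g k * exp (-v) := by have := hg k; positivity
    field_simp
  have hinv : exp (-v) * exp v = 1 := by rw [← exp_add]; simp
  rw [sum_congr rfl fun k _ => hterm k, ← mul_sum]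
  linear_combination -M * exp (-v) * hfix + M * hinv

end Rate

theorem fixed_point_minimizes_rate_general
    (K : ℕ) (M : ℕ) (σ : ℝ) (hσ : 0 < σ)
    (l : Fin K → ℝ)
    (p : Fin K → ℝ) (hp : ∀ k, 0 ≤ p k)
    (R : ℝ → ℝ)
    (hR : ∀ v, R v =
      (∑ k, Real.logb 2 (1 + M * l k ^ 2 * p k / (Real.exp v * σ ^ 2))) +
        M * Real.logb 2 (Real.exp 1) * (v - 1 + Real.exp (-v)))
    (vstar : ℝ)
    (hfix : Real.exp vstar =
      1 + ∑ k, (l k ^ 2 * p k) /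
        (σ ^ 2 + M * l k ^ 2 * p k * Real.exp (-vstar))) :
    ∀ v ≥ (0 : ℝ), R vstar ≤ R v := by
  intro v _
  have hg : ∀ k, 0 ≤ l k ^ 2 * p k := fun k => mul_nonneg (sq_nonneg _) (hp k)
  have hR_nats : ∀ w, R w = rateNats M (fun k => M * (l k ^ 2 * p k) / σ ^ 2) w / log 2 := by
    intro w
    have harg : ∀ k, M * l k ^ 2 * p k / (exp w * σ ^ 2) =
        M * (l k ^ 2 * p k) / σ ^ 2 * exp (-w) := by
      intro k; rw [exp_neg]; field_simp
    simp only [hR, harg, rateNats, logb, log_exp, add_div, sum_div]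
    ring
  have hstat := stationary_of_fixedPoint M.cast_nonneg (pow_pos hσ 2) hg
    (by simpa only [mul_assoc] using hfix)
  rw [hR_nats, hR_nats]
  gcongr
  exact rateNats_le_of_stationary M.cast_nonneg
    (fun k => div_nonneg (mul_nonneg M.cast_nonneg (hg k)) (sq_nonneg σ)) hstat v

/-- The fixed point of the slack equation minimizes the approximate rate
`R(v)` over `v ≥ 0`. -/
theorem fixed_point_minimizes_rate
    (K : ℕ) (M : ℕ) (hM : 1 ≤ M) (σ : ℝ) (hσ : 0 < σ)
    (l : Fin K → ℝ) (hl : ∀ k, 0 < l k)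
    (p : Fin K → ℝ) (hp : ∀ k, 0 ≤ p k)
    (R : ℝ → ℝ)
    (hR : ∀ v, R v =
      (∑ k, Real.logb 2 (1 + M * l k ^ 2 * p k / (Real.exp v * σ ^ 2))) +
        M * Real.logb 2 (Real.exp 1) * (v - 1 + Real.exp (-v)))
    (vstar : ℝ) (hvstar : 0 ≤ vstar)
    (hfix : Real.exp vstar =
      1 + ∑ k, (l k ^ 2 * p k) /
        (σ ^ 2 + M * l k ^ 2 * p k * Real.exp (-vstar))) :
    ∀ v ≥ (0 : ℝ), R vstar ≤ R v :=
  fixed_point_minimizes_rate_general K M σ hσ l p hp R hR vstar hfix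
end

section
/- Under the hypotheses of the previous statement, the following two constraint systems on (p, τ) are equivalent, where x u g ∈ {0,1} and T ≥ 0 are fixed: (i) for all (n,u): ∑_g x u g · T · R(p_g, v*_{u,g}) ≥ τ, where each v*_{u,g} ≥ 0 satisfies the fixed-point equation e^{v} = 1 + ∑_k l_k^2 p_{g,k}/(σ^2 + M l_k^2 p_{g,k} e^{−v}); and (ii) for all (n,u) and for all v_{u,g} ≥ 0: ∑_g x u g · T · R(p_g, v_{u,g}) ≥ τ together with v_{u,g} ≥ 0. That is, (p, τ) is feasible for (i) iff (p, τ) satisfies ∑_g x u g · T · (min over v ≥ 0 of R(p_g, v)) ≥ τ for all u. -/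
/-!
Substituting `a_k = M l_k² q_k / σ²`, the rate is `R(q, v) = F(v) / log 2` with
`F(v) = ∑ₖ log (1 + a_k e^{-v}) + M (v - 1 + e^{-v})`. The derivative
`F'(v) = M (1 - e^{-v}) - ∑ₖ a_k / (e^v + a_k)` is monotone, so `F` is convex, and multiplying
the fixed-point equation by `M e^{-v}` turns it into `F'(v) = 0`. Hence every fixed point `v*`
minimizes `F`, and the bound at `v*` is the weakest of the bounds at all `v ≥ 0`
(the weights `x u g · T` being nonnegative).
-/

open Real Finset Set

theorem isMinOn_univ_of_hasDerivAt_of_monotone {f f' : ℝ → ℝ}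
    (hf : ∀ x, HasDerivAt f (f' x) x) (hf' : Monotone f') {w : ℝ} (hw : f' w = 0) :
    IsMinOn f univ w := by
  have hderiv : deriv f = f' := funext fun x => (hf x).deriv
  have hconv : ConvexOn ℝ univ f :=
    Monotone.convexOn_univ_of_deriv (fun x => (hf x).differentiableAt) (hderiv ▸ hf')
  refine hconv.isMinOn_of_rightDeriv_eq_zero (by simp) ?_
  rw [(hf w).hasDerivWithinAt.derivWithin (uniqueDiffWithinAt_Ioi w), hw]

section SlackObjective

variable {ι : Type*} [Fintype ι]

noncomputable def slackObjective (M : ℝ) (a : ι → ℝ) (v : ℝ) : ℝ :=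
  (∑ k, log (1 + a k * exp (-v))) + M * (v - 1 + exp (-v))

noncomputable def slackObjectiveDeriv (M : ℝ) (a : ι → ℝ) (v : ℝ) : ℝ :=
  M * (1 - exp (-v)) - ∑ k, a k / (exp v + a k)

theorem hasDerivAt_log_one_add_mul_exp_neg {a : ℝ} (ha : 0 ≤ a) (v : ℝ) :
    HasDerivAt (fun v => log (1 + a * exp (-v))) (-(a / (exp v + a))) v := by
  have hexp : HasDerivAt (fun v => exp (-v)) (-exp (-v)) v := by
    simpa using (hasDerivAt_neg v).exp
  convert ((hexp.const_mul a).const_add 1).log (by positivity) using 1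
  rw [exp_neg]
  field_simp

theorem hasDerivAt_slackObjective (M : ℝ) {a : ι → ℝ} (ha : ∀ k, 0 ≤ a k) (v : ℝ) :
    HasDerivAt (slackObjective M a) (slackObjectiveDeriv M a v) v := by
  have hsum := HasDerivAt.fun_sum (u := univ)
    fun k _ => hasDerivAt_log_one_add_mul_exp_neg (ha k) v
  have hlin : HasDerivAt (fun v => v - 1 + exp (-v)) (1 - exp (-v)) v :=
    (((hasDerivAt_id' v).sub_const 1).fun_add (hasDerivAt_neg v).exp).congr_deriv (by ring)
  refine (hsum.fun_add (hlin.const_mul M)).congr_deriv ?_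
  rw [slackObjectiveDeriv, sum_neg_distrib]
  ring

theorem monotone_slackObjectiveDeriv {M : ℝ} (hM : 0 ≤ M) {a : ι → ℝ} (ha : ∀ k, 0 ≤ a k) :
    Monotone (slackObjectiveDeriv M a) := by
  intro v w hvw
  unfold slackObjectiveDeriv
  gcongr with k
  exacts [ha k, add_pos_of_pos_of_nonneg (exp_pos v) (ha k)]

theorem isMinOn_slackObjective {M : ℝ} (hM : 0 ≤ M) {a : ι → ℝ} (ha : ∀ k, 0 ≤ a k) {w : ℝ}
    (hw : slackObjectiveDeriv M a w = 0) : IsMinOn (slackObjective M a) univ w :=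
  isMinOn_univ_of_hasDerivAt_of_monotone (hasDerivAt_slackObjective M ha)
    (monotone_slackObjectiveDeriv hM ha) hw

theorem slackObjectiveDeriv_eq_zero_of_fixedPoint {M σ : ℝ} (hM : 0 ≤ M) (hσ : σ ≠ 0)
    {l q : ι → ℝ} (hq : ∀ k, 0 ≤ q k) {w : ℝ}
    (hw : exp w = 1 + ∑ k, l k ^ 2 * q k / (σ ^ 2 + M * l k ^ 2 * q k * exp (-w))) :
    slackObjectiveDeriv M (fun k => M * l k ^ 2 * q k / σ ^ 2) w = 0 := by
  have hexp_sub_one :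
      exp w - 1 = ∑ k, l k ^ 2 * q k / (σ ^ 2 + M * l k ^ 2 * q k * exp (-w)) := by
    rw [hw, add_sub_cancel_left]
  have hfactor : M * (1 - exp (-w)) = M * exp (-w) * (exp w - 1) := by
    rw [exp_neg]
    field_simp
  rw [slackObjectiveDeriv, sub_eq_zero, hfactor, hexp_sub_one, mul_sum]
  refine sum_congr rfl fun k _ => ?_
  have hnum : 0 ≤ M * l k ^ 2 * q k := by have := hq k; positivity
  have hden₁ : 0 < σ ^ 2 + M * l k ^ 2 * q k * exp (-w) := by positivity
  have hden₂ : 0 < exp w + M * l k ^ 2 * q k / σ ^ 2 := by positivity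
  rw [mul_div_assoc', div_eq_div_iff hden₁.ne' hden₂.ne', exp_neg]
  field_simp

theorem sum_logb_add_eq_slackObjective_div_log (M σ : ℝ) (l q : ι → ℝ) (v : ℝ) :
    (∑ k, logb 2 (1 + M * l k ^ 2 * q k / (exp v * σ ^ 2))) +
        M * logb 2 (exp 1) * (v - 1 + exp (-v)) =
      slackObjective M (fun k => M * l k ^ 2 * q k / σ ^ 2) v / log 2 := by
  have hterm : ∀ k, M * l k ^ 2 * q k / (exp v * σ ^ 2) = M * l k ^ 2 * q k / σ ^ 2 * exp (-v) :=
    fun k => by rw [exp_neg]; ring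
  simp only [hterm, logb, log_exp, slackObjective]
  rw [add_div, sum_div]
  ring

end SlackObjective

theorem constraint_systems_equivalent_general
    (U G K : ℕ) (M : ℕ) (σ : ℝ) (hσ : 0 < σ)
    (l : Fin K → ℝ)
    (x : Fin U → Fin G → ℝ) (hx01 : ∀ u g, x u g = 0 ∨ x u g = 1)
    (T : ℝ) (hT : 0 ≤ T)
    (p : Fin G → Fin K → ℝ) (hp : ∀ g k, 0 ≤ p g k)
    (R : (Fin K → ℝ) → ℝ → ℝ)
    (hR : ∀ q v, R q v =
      (∑ k, Real.logb 2 (1 + M * l k ^ 2 * q k / (Real.exp v * σ ^ 2))) +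
        M * Real.logb 2 (Real.exp 1) * (v - 1 + Real.exp (-v)))
    (vstar : Fin U → Fin G → ℝ) (hvstar : ∀ u g, 0 ≤ vstar u g)
    (hfix : ∀ u g, Real.exp (vstar u g) =
      1 + ∑ k, (l k ^ 2 * p g k) /
        (σ ^ 2 + M * l k ^ 2 * p g k * Real.exp (-(vstar u g))))
    (τ : ℝ) :
    (∀ u : Fin U, τ ≤ ∑ g, x u g * T * R (p g) (vstar u g)) ↔
    (∀ u : Fin U, ∀ v : Fin G → ℝ, (∀ g, 0 ≤ v g) →
      τ ≤ ∑ g, x u g * T * R (p g) (v g)) := by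
  have hM : (0 : ℝ) ≤ M := M.cast_nonneg
  have hvstar_min : ∀ u g v, R (p g) (vstar u g) ≤ R (p g) v := fun u g v => by
    have ha : ∀ k, 0 ≤ (M : ℝ) * l k ^ 2 * p g k / σ ^ 2 := fun k => by
      have := hp g k; positivity
    rw [hR, hR, sum_logb_add_eq_slackObjective_div_log, sum_logb_add_eq_slackObjective_div_log]
    gcongr
    exact isMinOn_slackObjective hM ha
      (slackObjectiveDeriv_eq_zero_of_fixedPoint hM hσ.ne' (hp g) (hfix u g)) (mem_univ v)
  have hweight : ∀ u g, 0 ≤ x u g * T := fun u g => by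
    rcases hx01 u g with h | h <;> simp [h, hT]
  refine ⟨fun h u v _ => (h u).trans (sum_le_sum fun g _ => ?_), fun h u => h u _ (hvstar u)⟩
  exact mul_le_mul_of_nonneg_left (hvstar_min u g (v g)) (hweight u g)

/-- Theorem 3: with the slack variables at their fixed points, the rate
lower-bound constraints are equivalent to requiring the bound for all
nonnegative slack values. -/
theorem constraint_systems_equivalent
    (U G K : ℕ) (M : ℕ) (hM : 1 ≤ M) (σ : ℝ) (hσ : 0 < σ)
    (l : Fin K → ℝ) (hl : ∀ k, 0 < l k)
    (x : Fin U → Fin G → ℝ) (hx01 : ∀ u g, x u g = 0 ∨ x u g = 1)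
    (T : ℝ) (hT : 0 ≤ T)
    (p : Fin G → Fin K → ℝ) (hp : ∀ g k, 0 ≤ p g k)
    (R : (Fin K → ℝ) → ℝ → ℝ)
    (hR : ∀ q v, R q v =
      (∑ k, Real.logb 2 (1 + M * l k ^ 2 * q k / (Real.exp v * σ ^ 2))) +
        M * Real.logb 2 (Real.exp 1) * (v - 1 + Real.exp (-v)))
    (vstar : Fin U → Fin G → ℝ) (hvstar : ∀ u g, 0 ≤ vstar u g)
    (hfix : ∀ u g, Real.exp (vstar u g) =
      1 + ∑ k, (l k ^ 2 * p g k) /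
        (σ ^ 2 + M * l k ^ 2 * p g k * Real.exp (-(vstar u g))))
    (τ : ℝ) :
    (∀ u : Fin U, τ ≤ ∑ g, x u g * T * R (p g) (vstar u g)) ↔
    (∀ u : Fin U, ∀ v : Fin G → ℝ, (∀ g, 0 ≤ v g) →
      τ ≤ ∑ g, x u g * T * R (p g) (v g)) :=
  constraint_systems_equivalent_general U G K M σ hσ l x hx01 T hT p hp R hR vstar hvstar hfix τ
end
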